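/- For all integers m ≥ 2, n ≥ 1 and k ≥ 1, one has [w_{m−1,n,k}, x] = [z_{m,n}, x, (2^k−1)…, x] · w_{m,n+1,k} · z_{m+2^k−1, n+2^k−1}^{−1}. (Equation (3.3) of the paper, used in the proof of Lemma 3.3(i).) -/

import Mathlib

namespace Paper

variable {G : Type*} [Group G]

/-- The paper's commutator `[a,b] = a⁻¹ b⁻¹ a b`. -/
def pc {G : Type*} [Group G] (a b : G) : G := a⁻¹ * b⁻¹ * a * b

/-- The left-normed iterated commutator `[a, x, (r)…, x]`. -/
def itc {G : Type*} [Group G] (x a : G) : ℕ → G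
  | 0 => a
  | r + 1 => pc (itc x a r) x

/-- `c_i`, where `c_1 = y` and `c_{i+1} = [c_i, x]`; equivalently `c_i = [y, x, (i-1)…, x]`. -/
def cc (x y : G) (i : ℕ) : G := itc x y (i - 1)

/-- `z_{m,n} = [c_m, c_n]`. -/
def zz (x y : G) (m n : ℕ) : G := pc (cc x y m) (cc x y n)

/-- `H = ⟨c_i : i ≥ 1⟩`. -/
def Hsub (x y : G) : Subgroup G :=
  Subgroup.closure {g | ∃ i, 1 ≤ i ∧ g = cc x y i}

/-- `Z = ⟨c_l², z_{m,n} : l, m, n ≥ 1⟩`. -/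
def Zsub (x y : G) : Subgroup G :=
  Subgroup.closure ({g | ∃ l, 1 ≤ l ∧ g = cc x y l ^ 2} ∪
    {g | ∃ m n, 1 ≤ m ∧ 1 ≤ n ∧ g = zz x y m n})

/-- `w_{i,j,k} = ∏_{t=1}^{2^k−1} [z_{i+t,j+t−1}, x, (2^k−1−t)…, x]`,
factors in order of increasing `t` (reindexed by `t ↦ t+1`). -/
def ww (x y : G) (i j k : ℕ) : G :=
  ((List.range (2 ^ k - 1)).map
    (fun t => itc x (zz x y (i + t + 1) (j + t)) (2 ^ k - 2 - t))).prod

/-- `L_k`, the normal closure of `{w_{i,j,k} : i,j ≥ 1} ∪ {z_{m,n} : m ≥ 2^k, n ≥ 1}`. -/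
def Lsub (x y : G) (k : ℕ) : Subgroup G :=
  Subgroup.normalClosure ({g | ∃ i j, 1 ≤ i ∧ 1 ≤ j ∧ g = ww x y i j k} ∪
    {g | ∃ m n, 2 ^ k ≤ m ∧ 1 ≤ n ∧ g = zz x y m n})

/-- `Q_k = ⟨c_l² : l ≥ 2^{k−1}⟩`. -/
def Qsub (x y : G) (k : ℕ) : Subgroup G :=
  Subgroup.closure {g | ∃ l, 2 ^ (k - 1) ≤ l ∧ g = cc x y l ^ 2}

/-- `d_k(h) = [h,x,(2^k−1)…,x]⁻¹ · x^{−2^k} · (xh)^{2^k}`. -/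
def dd (x y : G) (k : ℕ) (h : G) : G :=
  (itc x h (2 ^ k - 1))⁻¹ * (x ^ 2 ^ k)⁻¹ * (x * h) ^ 2 ^ k

/-- `Γ^{2^k} = ⟨g^{2^k} : g ∈ Γ⟩`. -/
def pow2Sub (G : Type*) [Group G] (k : ℕ) : Subgroup G :=
  Subgroup.closure {g | ∃ a : G, g = a ^ 2 ^ k}

/-- `ζ(h₁,h₂) = ∏_{ℓ=0}^{2^k−2} [h₁^x, x, (ℓ)…, x, h₂, x, (2^k−2−ℓ)…, x]`,
factors in order of increasing `ℓ`. -/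
def zeta (x : G) (k : ℕ) (h₁ h₂ : G) : G :=
  ((List.range (2 ^ k - 1)).map
    (fun l => itc x (pc (itc x (x⁻¹ * h₁ * x) l) h₂) (2 ^ k - 2 - l))).prod

/-! The subgroup generated by the `z_{m,n}` is abelian, since it lies in `Z ⊆ H` and `Z` commutes
with `H`. It is also stable under `g ↦ [g,x]`: conjugating by `x` turns `z_{m,n} = [c_m, c_n]` into
`[c_m c_{m+1}, c_n c_{n+1}]`, which expands into a product of `z`'s because `Z` is central in `H`.
So `g ↦ [g,x]` is multiplicative on it, `[w_{m−1,n,k}, x]` is the product of the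
`[z_{m+t,n+t}, x, (2^k−1−t)…, x]` for `0 ≤ t < 2^k−1`, and the identity just shifts the index of
this product by one. -/

theorem pc_one_left (c : G) : pc 1 c = 1 := by
  simp [pc]

theorem pc_mul_left_of_commute {a b c : G} (h : Commute (pc a c) b) :
    pc (a * b) c = pc a c * pc b c := by
  have expand : pc (a * b) c = b⁻¹ * (pc a c * b) * pc b c := by unfold pc; group
  rw [expand, h.eq]
  group

theorem pc_mul_right_of_commute {a b c : G} (h : Commute (pc a b) c) :
    pc a (b * c) = pc a c * pc a b := by
  have expand : pc a (b * c) = pc a c * (c⁻¹ * (pc a b * c)) := by unfold pc; group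
  rw [expand, h.eq]
  group

theorem pc_inv_left_of_commute {a c : G} (h : Commute (pc a c) a⁻¹) :
    pc a⁻¹ c = (pc a c)⁻¹ := by
  refine eq_inv_of_mul_eq_one_right ?_
  rw [← pc_mul_left_of_commute h, mul_inv_cancel, pc_one_left]

theorem conj_pc (x a b : G) : x⁻¹ * pc a b * x = pc (x⁻¹ * a * x) (x⁻¹ * b * x) := by
  unfold pc; group

theorem pc_eq_inv_mul_conj (g x : G) : pc g x = g⁻¹ * (x⁻¹ * g * x) := by
  unfold pc; group

theorem pc_list_prod {K : Subgroup G} (hK : ∀ a ∈ K, ∀ b ∈ K, Commute a b) {x : G}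
    (hKx : ∀ g ∈ K, pc g x ∈ K) (L : List G) (hL : ∀ g ∈ L, g ∈ K) :
    pc L.prod x = (L.map (pc · x)).prod := by
  induction L with
  | nil => exact pc_one_left x
  | cons a L ih =>
    have hLK : ∀ g ∈ L, g ∈ K := fun g hg => hL g (List.mem_cons_of_mem a hg)
    have hcomm : Commute (pc a x) L.prod :=
      hK _ (hKx a (hL a List.mem_cons_self)) _ (K.list_prod_mem hLK)
    rw [List.prod_cons, pc_mul_left_of_commute hcomm, ih hLK, List.map_cons, List.prod_cons]

theorem pc_mem_closure_of_commute {S : Set G} (hS : ∀ a ∈ Subgroup.closure S,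
    ∀ b ∈ Subgroup.closure S, Commute a b) {x : G} (hSx : ∀ s ∈ S, pc s x ∈ Subgroup.closure S)
    {g : G} (hg : g ∈ Subgroup.closure S) : pc g x ∈ Subgroup.closure S := by
  induction hg using Subgroup.closure_induction with
  | mem s hs => exact hSx s hs
  | one => rw [pc_one_left]; exact one_mem _
  | mul a b ha hb hax hbx =>
    rw [pc_mul_left_of_commute (hS _ hax _ hb)]
    exact mul_mem hax hbx
  | inv a ha hax =>
    rw [pc_inv_left_of_commute (hS _ hax _ (inv_mem ha))]
    exact inv_mem hax

theorem itc_mem {K : Subgroup G} {x g : G} (hKx : ∀ g ∈ K, pc g x ∈ K) (hg : g ∈ K) (r : ℕ) :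
    itc x g r ∈ K := by
  induction r with
  | zero => exact hg
  | succ r ih => exact hKx _ ih

def zzSub (x y : G) : Subgroup G :=
  Subgroup.closure {g | ∃ m n, 1 ≤ m ∧ 1 ≤ n ∧ g = zz x y m n}

theorem zzSub_le_Zsub (x y : G) : zzSub x y ≤ Zsub x y :=
  Subgroup.closure_mono Set.subset_union_right

theorem cc_succ (x y : G) {i : ℕ} (hi : 1 ≤ i) : cc x y (i + 1) = pc (cc x y i) x := by
  obtain ⟨j, rfl⟩ := Nat.exists_eq_add_of_le' hi
  rfl

theorem cc_mem_Hsub (x y : G) (i : ℕ) : cc x y i ∈ Hsub x y := by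
  rcases Nat.eq_zero_or_pos i with rfl | hi
  · exact Subgroup.subset_closure ⟨1, le_rfl, rfl⟩
  · exact Subgroup.subset_closure ⟨i, hi, rfl⟩

theorem Zsub_le_Hsub (x y : G) : Zsub x y ≤ Hsub x y := by
  rw [Zsub, Subgroup.closure_le]
  rintro g (⟨l, -, rfl⟩ | ⟨m, n, -, -, rfl⟩)
  · exact pow_mem (cc_mem_Hsub x y l) 2
  · exact mul_mem (mul_mem (mul_mem (inv_mem (cc_mem_Hsub x y m)) (inv_mem (cc_mem_Hsub x y n)))
      (cc_mem_Hsub x y m)) (cc_mem_Hsub x y n)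

/-- `c_0 = c_1`, since `i - 1` truncates. -/
theorem zz_mem_zzSub (x y : G) (m n : ℕ) : zz x y m n ∈ zzSub x y := by
  have hcc : ∀ i, cc x y i = cc x y (max i 1) := by
    rintro (_ | i)
    · rfl
    · rw [max_eq_left (by omega)]
  rw [zz, hcc m, hcc n]
  exact Subgroup.subset_closure ⟨_, _, le_max_right _ _, le_max_right _ _, rfl⟩

section

variable {x y : G}

theorem zzSub_commute (hca : ∀ z ∈ Zsub x y, ∀ h ∈ Hsub x y, z * h = h * z)
    {a b : G} (ha : a ∈ zzSub x y) (hb : b ∈ zzSub x y) : Commute a b :=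
  hca a (zzSub_le_Zsub x y ha) b (Zsub_le_Hsub x y (zzSub_le_Zsub x y hb))

theorem pc_zz_mem_zzSub (hca : ∀ z ∈ Zsub x y, ∀ h ∈ Hsub x y, z * h = h * z)
    {m n : ℕ} (hm : 1 ≤ m) (hn : 1 ≤ n) : pc (zz x y m n) x ∈ zzSub x y := by
  have conj_cc : ∀ {i}, 1 ≤ i → x⁻¹ * cc x y i * x = cc x y i * cc x y (i + 1) := by
    intro i hi
    rw [cc_succ x y hi]
    unfold pc; group
  have expand_right : ∀ i, pc (cc x y i) (cc x y n * cc x y (n + 1)) =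
      zz x y i (n + 1) * zz x y i n := fun i =>
    pc_mul_right_of_commute (hca _ (zzSub_le_Zsub x y (zz_mem_zzSub x y i n)) _ (cc_mem_Hsub x y _))
  have expand_left : pc (cc x y m * cc x y (m + 1)) (cc x y n * cc x y (n + 1)) =
      pc (cc x y m) (cc x y n * cc x y (n + 1)) *
        pc (cc x y (m + 1)) (cc x y n * cc x y (n + 1)) := by
    refine pc_mul_left_of_commute (hca _ ?_ _ (cc_mem_Hsub x y _))
    rw [expand_right]
    exact zzSub_le_Zsub x y (mul_mem (zz_mem_zzSub x y _ _) (zz_mem_zzSub x y _ _))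
  rw [pc_eq_inv_mul_conj, zz, conj_pc, conj_cc hm, conj_cc hn, expand_left, expand_right,
    expand_right, ← zz]
  exact mul_mem (inv_mem (zz_mem_zzSub x y _ _))
    (mul_mem (mul_mem (zz_mem_zzSub x y _ _) (zz_mem_zzSub x y _ _))
      (mul_mem (zz_mem_zzSub x y _ _) (zz_mem_zzSub x y _ _)))

theorem pc_mem_zzSub (hca : ∀ z ∈ Zsub x y, ∀ h ∈ Hsub x y, z * h = h * z)
    {g : G} (hg : g ∈ zzSub x y) : pc g x ∈ zzSub x y := by
  refine pc_mem_closure_of_commute (fun a ha b hb => zzSub_commute hca ha hb) ?_ hg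
  rintro _ ⟨m, n, hm, hn, rfl⟩
  exact pc_zz_mem_zzSub hca hm hn

end

theorem ww_eq_prod (x y : G) (i j k : ℕ) :
    ww x y i j k = ((List.range (2 ^ k - 1)).map
      fun t => itc x (zz x y (i + 1 + t) (j + t)) (2 ^ k - 1 - (t + 1))).prod := by
  unfold ww
  refine congrArg List.prod (List.map_congr_left fun t _ => ?_)
  rw [Nat.add_right_comm, Nat.sub_sub, Nat.sub_sub, Nat.add_comm t 1, ← Nat.add_assoc]

theorem eq_normal_w_general (x y : G)
    (hca : ∀ z ∈ Zsub x y, ∀ h ∈ Hsub x y, z * h = h * z)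
    (m n k : ℕ) (hm : 2 ≤ m) :
    pc (ww x y (m - 1) n k) x =
      itc x (zz x y m n) (2 ^ k - 1) * ww x y m (n + 1) k *
        (zz x y (m + 2 ^ k - 1) (n + 2 ^ k - 1))⁻¹ := by
  let F : ℕ → G := fun t => itc x (zz x y (m + t) (n + t)) (2 ^ k - 1 - t)
  have hleft : pc (ww x y (m - 1) n k) x = ((List.range (2 ^ k - 1)).map F).prod := by
    rw [ww_eq_prod, pc_list_prod (fun a ha b hb => zzSub_commute hca ha hb)
      (fun g hg => pc_mem_zzSub hca hg), List.map_map]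
    · refine congrArg List.prod (List.map_congr_left fun t ht => ?_)
      have ht : t < 2 ^ k - 1 := List.mem_range.1 ht
      simp only [F, Function.comp_apply]
      rw [show m - 1 + 1 + t = m + t by omega, show 2 ^ k - 1 - t = 2 ^ k - 1 - (t + 1) + 1 by omega]
      rfl
    · simp only [List.mem_map]
      rintro _ ⟨t, -, rfl⟩
      exact itc_mem (fun g hg => pc_mem_zzSub hca hg) (zz_mem_zzSub x y _ _) _
  have hright : ww x y m (n + 1) k = ((List.range (2 ^ k - 1)).map fun t => F (t + 1)).prod := by
    rw [ww_eq_prod]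
    simp only [F, Nat.add_assoc, Nat.add_comm 1]
  have hfirst : itc x (zz x y m n) (2 ^ k - 1) = F 0 := rfl
  have hlast : zz x y (m + 2 ^ k - 1) (n + 2 ^ k - 1) = F (2 ^ k - 1) := by
    have : 1 ≤ 2 ^ k := Nat.one_le_two_pow
    simp only [F, Nat.sub_self, Nat.add_sub_assoc this]
    rfl
  rw [hleft, hright, hfirst, hlast, eq_mul_inv_iff_mul_eq, ← List.prod_range_succ,
    List.prod_range_succ']

theorem eq_normal_w (x y : G)
    (hca : ∀ z ∈ Zsub x y, ∀ h ∈ Hsub x y, z * h = h * z)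
    (hz2 : ∀ z ∈ Zsub x y, z ^ 2 = 1)
    (m n k : ℕ) (hm : 2 ≤ m) (hn : 1 ≤ n) (hk : 1 ≤ k) :
    pc (ww x y (m - 1) n k) x =
      itc x (zz x y m n) (2 ^ k - 1) * ww x y m (n + 1) k *
        (zz x y (m + 2 ^ k - 1) (n + 2 ^ k - 1))⁻¹ :=
  eq_normal_w_general x y hca m n k hm

end Paper
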